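/- Let Z be a standard normal random variable, b ∈ ℝ, and set Y = Z − E[Z | Z ≤ b] (so E[Y | Z ≤ b] = 0 and the conditional variance of Y given {Z ≤ b} equals V(b) = Var(Z | Z ≤ b)). Then for every u > 0, log E[exp(uY) | Z ≤ b] ≤ (u²/2)·V(b). -/

import Mathlib

/-- The standard normal density `φ(t) = exp(-t²/2)/√(2π)`. -/
noncomputable def stdPhi (t : ℝ) : ℝ := Real.exp (-t ^ 2 / 2) / Real.sqrt (2 * Real.pi)

/-- The standard normal CDF `Φ(t) = ∫_{-∞}^t φ(s) ds`. -/
noncomputable def stdCDF (t : ℝ) : ℝ := ∫ s in Set.Iic t, stdPhi s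

/-- The conditional mean `E[Z | Z ≤ b] = (1/Φ(b)) ∫_{-∞}^b z φ(z) dz`. -/
noncomputable def truncMean (b : ℝ) : ℝ :=
  (stdCDF b)⁻¹ * ∫ z in Set.Iic b, z * stdPhi z

/-- The variance of a standard normal truncated from above at `b`:
`V(b) = E[Z² | Z ≤ b] - (E[Z | Z ≤ b])²`. -/
noncomputable def truncVar (b : ℝ) : ℝ :=
  (stdCDF b)⁻¹ * (∫ z in Set.Iic b, z ^ 2 * stdPhi z) - (truncMean b) ^ 2

/-! With `h = φ / Φ` we have `E[Z | Z ≤ b] = -h(b)` and `V = 1 - k` for `k = -h'`, so the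
claim reads `log Φ(b - u) ≤ log Φ(b) - u h(b) - (u² / 2) k(b)`. This is a second-order Taylor
bound for `v ↦ log Φ(b - v)`, whose second derivative `-k(b - v)` decreases in `v` as soon as
`k` is antitone, i.e. as soon as the truncated variance `V(b)` increases with `b`. That
monotonicity is the analytic core: `k'` has the sign of `-N₀` for an explicit `N₀` built from
`t`, `φ`, `Φ`, and `N₀ ≥ 0` follows by differentiating repeatedly, since all the functions
involved vanish at `-∞`. -/

open Real MeasureTheory Set Filter Topology

lemma nonneg_of_tendsto_atBot_of_hasDerivAt_nonneg {F F' : ℝ → ℝ} {c t : ℝ}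
    (hF : ∀ x ≤ c, HasDerivAt F (F' x) x) (hF' : ∀ x ≤ c, 0 ≤ F' x)
    (hlim : Tendsto F atBot (𝓝 0)) (ht : t ≤ c) : 0 ≤ F t := by
  have hmono : MonotoneOn F (Iic c) := by
    refine monotoneOn_of_hasDerivWithinAt_nonneg (f' := F') (convex_Iic c)
      (fun x hx => (hF x hx).continuousAt.continuousWithinAt) (fun x hx => ?_) (fun x hx => ?_)
    all_goals rw [interior_Iic] at hx
    · exact (hF x hx.le).hasDerivWithinAt
    · exact hF' x hx.le
  refine le_of_tendsto hlim ?_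
  filter_upwards [eventually_le_atBot t] with s hs
  exact hmono (hs.trans ht) ht hs

lemma antitoneOn_Icc_of_hasDerivAt_nonpos {f f' : ℝ → ℝ} {a b : ℝ}
    (hf : ∀ x ∈ Icc a b, HasDerivAt f (f' x) x) (hf' : ∀ x ∈ Ioo a b, f' x ≤ 0) :
    AntitoneOn f (Icc a b) := by
  refine antitoneOn_of_hasDerivWithinAt_nonpos (f' := f') (convex_Icc a b)
    (fun x hx => (hf x hx).continuousAt.continuousWithinAt) (fun x hx => ?_) (fun x hx => ?_)
  all_goals rw [interior_Icc] at hx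
  · exact (hf x (Ioo_subset_Icc_self hx)).hasDerivWithinAt
  · exact hf' x hx

lemma le_of_hasDerivAt_of_secondDeriv_le {F F' F'' : ℝ → ℝ} {c v : ℝ} (hv : 0 ≤ v)
    (hF : ∀ x ∈ Icc 0 v, HasDerivAt F (F' x) x)
    (hF' : ∀ x ∈ Icc 0 v, HasDerivAt F' (F'' x) x)
    (hF'' : ∀ x ∈ Icc 0 v, F'' x ≤ c) :
    F v ≤ F 0 + F' 0 * v + c * v ^ 2 / 2 := by
  have hslope : ∀ x ∈ Icc 0 v, F' x - F' 0 - c * x ≤ 0 := by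
    have hanti := antitoneOn_Icc_of_hasDerivAt_nonpos (f := fun x => F' x - F' 0 - c * x)
      (fun x hx => ((hF' x hx).sub_const _).sub ((hasDerivAt_id x).const_mul c))
      (fun x hx => by simpa using hF'' x (Ioo_subset_Icc_self hx))
    intro x hx
    simpa using hanti (left_mem_Icc.2 hv) hx hx.1
  have hanti := antitoneOn_Icc_of_hasDerivAt_nonpos
    (f := fun x => F x - F 0 - F' 0 * x - c * x ^ 2 / 2)
    (fun x hx => ((((hF x hx).sub_const _).sub ((hasDerivAt_id x).const_mul _)).sub
      (((hasDerivAt_pow 2 x).const_mul c).div_const 2)).congr_deriv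
        (show _ = F' x - F' 0 - c * x by simp; ring))
    (fun x hx => hslope x (Ioo_subset_Icc_self hx))
  have := hanti (left_mem_Icc.2 hv) (right_mem_Icc.2 hv) hv
  simp only [sub_self, mul_zero, ne_eq, OfNat.ofNat_ne_zero, not_false_eq_true,
    zero_pow, zero_div] at this
  linarith

lemma stdPhi_eq_gaussianPDFReal : stdPhi = ProbabilityTheory.gaussianPDFReal 0 1 := by
  ext t
  simp [stdPhi, ProbabilityTheory.gaussianPDFReal, div_eq_inv_mul]

lemma stdPhi_pos (t : ℝ) : 0 < stdPhi t := by
  unfold stdPhi; positivity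

lemma stdPhi_neg (t : ℝ) : stdPhi (-t) = stdPhi t := by
  simp [stdPhi]

lemma continuous_stdPhi : Continuous stdPhi := by
  unfold stdPhi; fun_prop

lemma hasDerivAt_stdPhi (t : ℝ) : HasDerivAt stdPhi (-t * stdPhi t) t := by
  have h := ((((hasDerivAt_pow 2 t).neg).div_const 2).exp).div_const (√(2 * π))
  exact h.congr_deriv (by simp only [stdPhi, Pi.neg_apply]; ring)

lemma integrable_stdPhi : Integrable stdPhi := by
  rw [stdPhi_eq_gaussianPDFReal]; exact ProbabilityTheory.integrable_gaussianPDFReal 0 1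

lemma integral_stdPhi : ∫ t, stdPhi t = 1 := by
  rw [stdPhi_eq_gaussianPDFReal]
  exact ProbabilityTheory.integral_gaussianPDFReal_eq_one 0 one_ne_zero

lemma integrable_pow_mul_stdPhi (n : ℕ) : Integrable fun t : ℝ => t ^ n * stdPhi t := by
  have h := (integrable_rpow_mul_exp_neg_mul_sq (b := 1 / 2) (by norm_num)
    (s := n) (by linarith [n.cast_nonneg (α := ℝ)])).div_const (√(2 * π))
  refine h.congr (ae_of_all _ fun t => ?_)
  simp only [Real.rpow_natCast, stdPhi]
  ring_nf

lemma tendsto_pow_mul_stdPhi_atTop (n : ℕ) :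
    Tendsto (fun t : ℝ => t ^ n * stdPhi t) atTop (𝓝 0) := by
  have h := (tendsto_pow_mul_exp_neg_atTop_nhds_zero n).div_const (√(2 * π))
  rw [zero_div] at h
  refine squeeze_zero' ?_ ?_ h
  · filter_upwards [eventually_ge_atTop 0] with t ht
    exact mul_nonneg (pow_nonneg ht n) (stdPhi_pos t).le
  · filter_upwards [eventually_ge_atTop 2] with t ht
    rw [stdPhi, mul_div_assoc]
    gcongr
    nlinarith

lemma tendsto_pow_mul_stdPhi_atBot (n : ℕ) :
    Tendsto (fun t : ℝ => t ^ n * stdPhi t) atBot (𝓝 0) := by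
  have h := ((tendsto_pow_mul_stdPhi_atTop n).comp tendsto_neg_atBot_atTop).const_mul ((-1) ^ n)
  rw [mul_zero] at h
  refine h.congr fun t => ?_
  simp only [Function.comp, stdPhi_neg, ← mul_assoc, ← mul_pow]
  simp

lemma tendsto_stdPhi_atBot : Tendsto stdPhi atBot (𝓝 0) := by
  simpa using tendsto_pow_mul_stdPhi_atBot 0

lemma stdCDF_sub_stdCDF (s t : ℝ) : stdCDF t - stdCDF s = ∫ x in s..t, stdPhi x :=
  intervalIntegral.integral_Iic_sub_Iic integrable_stdPhi.integrableOn
    integrable_stdPhi.integrableOn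

lemma hasDerivAt_stdCDF (t : ℝ) : HasDerivAt stdCDF (stdPhi t) t := by
  have h := (intervalIntegral.integral_hasDerivAt_right (a := 0) (b := t)
    integrable_stdPhi.intervalIntegrable (continuous_stdPhi.stronglyMeasurableAtFilter _ _)
    continuous_stdPhi.continuousAt).const_add (stdCDF 0)
  exact h.congr_of_eventuallyEq (Eventually.of_forall fun x => by
    simp only [← stdCDF_sub_stdCDF]; ring)

lemma stdCDF_pos (t : ℝ) : 0 < stdCDF t := by
  have hsub : 0 < stdCDF t - stdCDF (t - 1) := by
    rw [stdCDF_sub_stdCDF]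
    exact intervalIntegral.intervalIntegral_pos_of_pos_on integrable_stdPhi.intervalIntegrable
      (fun x _ => stdPhi_pos x) (by linarith)
  have hnonneg : 0 ≤ stdCDF (t - 1) :=
    setIntegral_nonneg measurableSet_Iic fun x _ => (stdPhi_pos x).le
  linarith

lemma stdCDF_mono : Monotone stdCDF :=
  monotone_of_hasDerivAt_nonneg hasDerivAt_stdCDF fun t => (stdPhi_pos t).le

lemma stdCDF_zero : stdCDF 0 = 1 / 2 := by
  have hsplit : stdCDF 0 + ∫ t in Ioi 0, stdPhi t = 1 :=
    integral_stdPhi ▸ intervalIntegral.integral_Iic_add_Ioi integrable_stdPhi.integrableOn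
      integrable_stdPhi.integrableOn
  have hsymm : ∫ t in Ioi 0, stdPhi t = stdCDF 0 := by
    simpa [stdPhi_neg, stdCDF] using (integral_comp_neg_Iic (c := (0 : ℝ)) stdPhi).symm
  linarith

lemma integral_Iic_mul_stdPhi (b : ℝ) : ∫ z in Iic b, z * stdPhi z = -stdPhi b := by
  have h := integral_Iic_of_hasDerivAt_of_tendsto' (a := b) (f := fun t => -stdPhi t)
    (f' := fun z => z * stdPhi z)
    (fun x _ => (hasDerivAt_stdPhi x).neg.congr_deriv (by ring))
    (by simpa using (integrable_pow_mul_stdPhi 1).integrableOn (s := Iic b) (μ := volume))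
    (by simpa using tendsto_stdPhi_atBot.neg)
  simpa using h

lemma stdCDF_le_div_neg {t : ℝ} (ht : t < 0) : stdCDF t ≤ stdPhi t / -t := by
  have hle : ∀ s ∈ Iic t, stdPhi s ≤ t⁻¹ * (s * stdPhi s) := fun s hs => by
    rw [← mul_assoc]
    refine le_mul_of_one_le_left (stdPhi_pos s).le ?_
    rw [← div_eq_inv_mul, one_le_div_of_neg ht]
    exact hs
  have h := setIntegral_mono_on integrable_stdPhi.integrableOn
    ((by simpa using (integrable_pow_mul_stdPhi 1).const_mul t⁻¹ :
      Integrable fun s => t⁻¹ * (s * stdPhi s)).integrableOn) measurableSet_Iic hle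
  rw [integral_const_mul, integral_Iic_mul_stdPhi] at h
  calc stdCDF t ≤ t⁻¹ * -stdPhi t := h
    _ = stdPhi t / -t := by field_simp

lemma tendsto_pow_mul_stdCDF_atBot (n : ℕ) :
    Tendsto (fun t : ℝ => t ^ n * stdCDF t) atBot (𝓝 0) := by
  refine squeeze_zero_norm' ?_ (by simpa using (tendsto_pow_mul_stdPhi_atBot n).norm)
  filter_upwards [eventually_le_atBot (-1)] with t ht
  have hΦ : stdCDF t ≤ stdPhi t :=
    (stdCDF_le_div_neg (by linarith)).trans (div_le_self (stdPhi_pos t).le (by linarith))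
  simp only [norm_mul, norm_pow, Real.norm_eq_abs, abs_of_pos (stdCDF_pos t),
    abs_of_pos (stdPhi_pos t)]
  gcongr

lemma tendsto_stdCDF_atBot : Tendsto stdCDF atBot (𝓝 0) := by
  simpa using tendsto_pow_mul_stdCDF_atBot 0

lemma integral_Iic_sq_mul_stdPhi (b : ℝ) :
    ∫ z in Iic b, z ^ 2 * stdPhi z = stdCDF b - b * stdPhi b := by
  have h := integral_Iic_of_hasDerivAt_of_tendsto' (a := b) (f := fun t => stdCDF t - t * stdPhi t)
    (fun x _ => ((hasDerivAt_stdCDF x).sub ((hasDerivAt_id x).mul (hasDerivAt_stdPhi x)))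
      |>.congr_deriv (by simp; ring))
    (integrable_pow_mul_stdPhi 2).integrableOn
    (by simpa using tendsto_stdCDF_atBot.sub (tendsto_pow_mul_stdPhi_atBot 1))
  simpa using h

lemma exp_mul_stdPhi (u z : ℝ) :
    exp (u * z) * stdPhi z = exp (u ^ 2 / 2) * stdPhi (z - u) := by
  simp only [stdPhi, mul_div_assoc', ← Real.exp_add]
  ring_nf

lemma integral_Iic_exp_mul_stdPhi (u b : ℝ) :
    ∫ z in Iic b, exp (u * z) * stdPhi z = exp (u ^ 2 / 2) * stdCDF (b - u) := by
  have h := integral_Iic_of_hasDerivAt_of_tendsto' (a := b)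
    (f := fun t => exp (u ^ 2 / 2) * stdCDF (t - u))
    (fun x _ => (((hasDerivAt_stdCDF (x - u)).comp x ((hasDerivAt_id x).sub_const u)).const_mul
      _).congr_deriv (by simp))
    ((integrable_stdPhi.comp_sub_right u).const_mul (exp (u ^ 2 / 2))).integrableOn
    (by simpa [← sub_eq_add_neg] using (tendsto_stdCDF_atBot.comp
      (tendsto_atBot_add_const_right _ (-u) tendsto_id)).const_mul (exp (u ^ 2 / 2)))
  simpa [exp_mul_stdPhi] using h

lemma neg_mul_stdPhi_le_mul_stdCDF (t : ℝ) : -t * stdPhi t ≤ (t ^ 2 + 1) * stdCDF t := by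
  have hderiv (x : ℝ) : HasDerivAt (fun x => stdCDF x + x * stdPhi x / (x ^ 2 + 1))
      (2 * stdPhi x / (x ^ 2 + 1) ^ 2) x := by
    have h := (hasDerivAt_stdCDF x).add
      (((hasDerivAt_id x).mul (hasDerivAt_stdPhi x)).div ((hasDerivAt_pow 2 x).add_const 1)
        (by positivity))
    exact h.congr_deriv (by field_simp; simp; ring)
  have hlim : Tendsto (fun x => stdCDF x + x * stdPhi x / (x ^ 2 + 1)) atBot (𝓝 0) := by
    have hquot : Tendsto (fun x : ℝ => x * stdPhi x / (x ^ 2 + 1)) atBot (𝓝 0) := by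
      refine squeeze_zero_norm (fun x => ?_) (by simpa using (tendsto_pow_mul_stdPhi_atBot 1).norm)
      rw [norm_div, norm_mul, Real.norm_eq_abs, Real.norm_eq_abs]
      exact div_le_self (by positivity) (by rw [Real.norm_of_nonneg (by positivity)]; nlinarith)
    simpa using tendsto_stdCDF_atBot.add hquot
  have h := nonneg_of_tendsto_atBot_of_hasDerivAt_nonneg (fun x _ => hderiv x)
    (fun x _ => by have := stdPhi_pos x; positivity) hlim (le_refl t)
  have hpos : 0 < t ^ 2 + 1 := by positivity
  have hexpand : (t ^ 2 + 1) * (stdCDF t + t * stdPhi t / (t ^ 2 + 1))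
      = (t ^ 2 + 1) * stdCDF t + t * stdPhi t := by field_simp
  nlinarith [mul_nonneg hpos.le h]

lemma one_fifth_le_stdPhi {t : ℝ} (ht : t ^ 2 ≤ 1) : 1 / 5 ≤ stdPhi t := by
  have he : exp (1 / 2) ^ 2 < 2.72 := by
    rw [← Real.exp_nat_mul]; norm_num; linarith [Real.exp_one_lt_d9]
  have hexp : 3 / 5 ≤ exp (-t ^ 2 / 2) := by
    calc (3 / 5 : ℝ) ≤ (exp (1 / 2))⁻¹ := by
          rw [le_inv_comm₀ (by norm_num) (exp_pos _)]; nlinarith [exp_pos (1 / 2)]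
      _ = exp (-1 / 2) := by rw [← exp_neg]; norm_num
      _ ≤ exp (-t ^ 2 / 2) := exp_le_exp.2 (by linarith)
  have hsqrt : √(2 * π) ≤ 3 := by
    rw [Real.sqrt_le_left (by norm_num)]; nlinarith [Real.pi_lt_d2]
  rw [stdPhi, le_div_iff₀ (by positivity)]
  linarith

noncomputable def invMills (t : ℝ) : ℝ := stdPhi t / stdCDF t

noncomputable def varDeficit (t : ℝ) : ℝ := t * invMills t + invMills t ^ 2

lemma truncMean_eq_neg_invMills (b : ℝ) : truncMean b = -invMills b := by
  rw [truncMean, integral_Iic_mul_stdPhi, invMills]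
  ring

lemma truncVar_eq_one_sub_varDeficit (b : ℝ) : truncVar b = 1 - varDeficit b := by
  have := (stdCDF_pos b).ne'
  rw [truncVar, integral_Iic_sq_mul_stdPhi, truncMean_eq_neg_invMills, varDeficit, invMills]
  field_simp
  ring

lemma hasDerivAt_invMills (t : ℝ) : HasDerivAt invMills (-varDeficit t) t := by
  have := (stdCDF_pos t).ne'
  refine ((hasDerivAt_stdPhi t).div (hasDerivAt_stdCDF t) this).congr_deriv ?_
  simp only [varDeficit, invMills]
  field_simp
  ring

noncomputable def integratedStdCDF (t : ℝ) : ℝ := t * stdCDF t + stdPhi t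

lemma hasDerivAt_integratedStdCDF (t : ℝ) : HasDerivAt integratedStdCDF (stdCDF t) t :=
  (((hasDerivAt_id t).mul (hasDerivAt_stdCDF t)).add (hasDerivAt_stdPhi t)).congr_deriv
    (by simp)

lemma tendsto_pow_mul_integratedStdCDF_atBot (n : ℕ) :
    Tendsto (fun t => t ^ n * integratedStdCDF t) atBot (𝓝 0) := by
  simpa [integratedStdCDF, mul_add, ← mul_assoc, ← pow_succ] using
    (tendsto_pow_mul_stdCDF_atBot (n + 1)).add (tendsto_pow_mul_stdPhi_atBot n)

/-! `varDeficit' = -φ N₀ / Φ³`. Each of `N₀, …, N₃` tends to `0` at `-∞` and its derivative is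
a nonnegative multiple of the next one, so `N₀ ≥ 0` reduces to `N₄ ≥ 0` on `(-∞, 0]` (where
the Mills-ratio bound enters) and `N₂ ≥ 0` on `[0, ∞)`. -/
namespace VarDeficit

noncomputable def N₀ (t : ℝ) : ℝ :=
  integratedStdCDF t ^ 2 + integratedStdCDF t * stdPhi t - stdCDF t ^ 2

noncomputable def N₁ (t : ℝ) : ℝ :=
  2 * integratedStdCDF t * stdCDF t - stdPhi t * stdCDF t - t * integratedStdCDF t * stdPhi t

noncomputable def N₂ (t : ℝ) : ℝ :=
  2 * stdCDF t ^ 2 + (1 + t ^ 2) * integratedStdCDF t * stdPhi t - stdPhi t ^ 2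

noncomputable def N₃ (t : ℝ) : ℝ :=
  (5 + t ^ 2) * stdCDF t + (t - t ^ 3) * integratedStdCDF t + 2 * t * stdPhi t

noncomputable def N₄ (t : ℝ) : ℝ := t * (1 - t ^ 2) * stdCDF t + (2 - t ^ 2) * stdPhi t

lemma hasDerivAt_N₀ (t : ℝ) : HasDerivAt N₀ (N₁ t) t := by
  have hA := hasDerivAt_integratedStdCDF t
  exact (((hA.pow 2).add (hA.mul (hasDerivAt_stdPhi t))).sub ((hasDerivAt_stdCDF t).pow 2))
    |>.congr_deriv (by simp only [N₁, integratedStdCDF]; ring)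

lemma hasDerivAt_N₁ (t : ℝ) : HasDerivAt N₁ (N₂ t) t := by
  have hA := hasDerivAt_integratedStdCDF t
  have h := (((hA.const_mul 2).mul (hasDerivAt_stdCDF t)).sub
    ((hasDerivAt_stdPhi t).mul (hasDerivAt_stdCDF t))).sub
    (((hasDerivAt_id t).mul hA).mul (hasDerivAt_stdPhi t))
  exact h.congr_deriv (by simp only [N₂, integratedStdCDF, Pi.mul_apply, id_eq]; ring)

lemma hasDerivAt_N₂ (t : ℝ) : HasDerivAt N₂ (stdPhi t * N₃ t) t := by
  have hA := hasDerivAt_integratedStdCDF t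
  have h := ((((hasDerivAt_stdCDF t).pow 2).const_mul 2).add
    ((((hasDerivAt_pow 2 t).const_add 1).mul hA).mul (hasDerivAt_stdPhi t))).sub
    ((hasDerivAt_stdPhi t).pow 2)
  exact h.congr_deriv (by simp only [N₃, integratedStdCDF, Pi.mul_apply]; ring)

lemma hasDerivAt_N₃ (t : ℝ) : HasDerivAt N₃ (4 * N₄ t) t := by
  have hA := hasDerivAt_integratedStdCDF t
  have h := ((((hasDerivAt_pow 2 t).const_add 5).mul (hasDerivAt_stdCDF t)).add
    (((hasDerivAt_id t).sub (hasDerivAt_pow 3 t)).mul hA)).add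
    (((hasDerivAt_id t).const_mul 2).mul (hasDerivAt_stdPhi t))
  exact h.congr_deriv (by simp only [N₄, integratedStdCDF, Pi.sub_apply, id_eq]; ring)

lemma tendsto_N₀_atBot : Tendsto N₀ atBot (𝓝 0) := by
  have hA := tendsto_pow_mul_integratedStdCDF_atBot 0
  simp only [pow_zero, one_mul] at hA
  unfold N₀
  simpa using ((hA.pow 2).add (hA.mul tendsto_stdPhi_atBot)).sub (tendsto_stdCDF_atBot.pow 2)

lemma tendsto_N₁_atBot : Tendsto N₁ atBot (𝓝 0) := by
  have hA := tendsto_pow_mul_integratedStdCDF_atBot 0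
  have htA := tendsto_pow_mul_integratedStdCDF_atBot 1
  simp only [pow_zero, one_mul, pow_one] at hA htA
  unfold N₁
  simpa using ((hA.const_mul 2).mul tendsto_stdCDF_atBot).sub
    (tendsto_stdPhi_atBot.mul tendsto_stdCDF_atBot) |>.sub (htA.mul tendsto_stdPhi_atBot)

lemma tendsto_N₂_atBot : Tendsto N₂ atBot (𝓝 0) := by
  have hA := tendsto_pow_mul_integratedStdCDF_atBot 0
  have hA₂ := tendsto_pow_mul_integratedStdCDF_atBot 2
  simp only [pow_zero, one_mul] at hA
  have h := (((tendsto_stdCDF_atBot.pow 2).const_mul 2).add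
    ((hA.add hA₂).mul tendsto_stdPhi_atBot)).sub (tendsto_stdPhi_atBot.pow 2)
  simp only [add_zero, mul_zero, sub_zero, ne_eq, OfNat.ofNat_ne_zero,
    not_false_eq_true, zero_pow] at h
  exact h.congr fun t => by simp only [N₂]; ring

lemma tendsto_N₃_atBot : Tendsto N₃ atBot (𝓝 0) := by
  have h := ((((tendsto_pow_mul_stdCDF_atBot 0).const_mul 5).add
    (tendsto_pow_mul_stdCDF_atBot 2)).add
    ((tendsto_pow_mul_integratedStdCDF_atBot 1).sub
      (tendsto_pow_mul_integratedStdCDF_atBot 3))).add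
    ((tendsto_pow_mul_stdPhi_atBot 1).const_mul 2)
  simp only [add_zero, mul_zero, sub_zero] at h
  exact h.congr fun t => by simp only [N₃]; ring

lemma N₄_nonneg {t : ℝ} (ht : t ≤ 0) : 0 ≤ N₄ t := by
  rcases le_or_gt t (-1) with ht₁ | ht₁
  · have hmills := neg_mul_stdPhi_le_mul_stdCDF t
    have hcoef : 0 ≤ t * (1 - t ^ 2) := by nlinarith
    have hkey : 2 * stdPhi t ≤ (t ^ 2 + 1) * N₄ t := by
      simp only [N₄]; nlinarith [mul_le_mul_of_nonneg_left hmills hcoef]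
    nlinarith [stdPhi_pos t]
  · have hφ := one_fifth_le_stdPhi (t := t) (by nlinarith)
    have hΦ : stdCDF t ≤ 1 / 2 := stdCDF_zero ▸ stdCDF_mono ht
    have hcoef : t * (1 - t ^ 2) ≤ 0 := by nlinarith
    -- `t (1 - t²)` is minimal on `[-1, 0]` at `t = -1/√3 ≈ -0.5774`, with value `≈ -0.385`
    have hcubic : -(193 / 1000) ≤ t * (1 - t ^ 2) / 2 := by
      nlinarith [mul_nonneg (sq_nonneg (t + 0.5774)) (by linarith : (0 : ℝ) ≤ 1.1548 - t)]
    simp only [N₄]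
    nlinarith [mul_le_mul_of_nonpos_left hΦ hcoef,
      mul_nonneg (by nlinarith : (0 : ℝ) ≤ 1 - t ^ 2) (stdPhi_pos t).le]

lemma N₃_nonneg {t : ℝ} (ht : t ≤ 0) : 0 ≤ N₃ t :=
  nonneg_of_tendsto_atBot_of_hasDerivAt_nonneg (fun x _ => hasDerivAt_N₃ x)
    (fun x hx => by linarith [N₄_nonneg hx]) tendsto_N₃_atBot ht

lemma N₂_nonneg (t : ℝ) : 0 ≤ N₂ t := by
  rcases le_or_gt t 0 with ht | ht
  · exact nonneg_of_tendsto_atBot_of_hasDerivAt_nonneg (fun x _ => hasDerivAt_N₂ x)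
      (fun x hx => mul_nonneg (stdPhi_pos x).le (N₃_nonneg hx)) tendsto_N₂_atBot ht
  · have hφA : stdPhi t ≤ integratedStdCDF t := by
      simp only [integratedStdCDF]; nlinarith [stdCDF_pos t]
    have hφ := stdPhi_pos t
    simp only [N₂]
    nlinarith [mul_le_mul_of_nonneg_right hφA hφ.le, stdCDF_pos t,
      mul_nonneg (mul_nonneg (sq_nonneg t) hφ.le) hφ.le,
      mul_nonneg (mul_nonneg (mul_nonneg (sq_nonneg t) ht.le) (stdCDF_pos t).le) hφ.le]

lemma N₁_nonneg (t : ℝ) : 0 ≤ N₁ t :=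
  nonneg_of_tendsto_atBot_of_hasDerivAt_nonneg (fun x _ => hasDerivAt_N₁ x)
    (fun x _ => N₂_nonneg x) tendsto_N₁_atBot (le_refl t)

lemma N₀_nonneg (t : ℝ) : 0 ≤ N₀ t :=
  nonneg_of_tendsto_atBot_of_hasDerivAt_nonneg (fun x _ => hasDerivAt_N₀ x)
    (fun x _ => N₁_nonneg x) tendsto_N₀_atBot (le_refl t)

lemma hasDerivAt_varDeficit (t : ℝ) :
    HasDerivAt varDeficit (-(stdPhi t * N₀ t) / stdCDF t ^ 3) t := by
  have := (stdCDF_pos t).ne'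
  have hh := hasDerivAt_invMills t
  refine (((hasDerivAt_id t).mul hh).add (hh.pow 2)).congr_deriv ?_
  simp only [N₀, integratedStdCDF, varDeficit, invMills, id_eq, Nat.cast_ofNat,
    Nat.add_one_sub_one, pow_one]
  field_simp
  ring

end VarDeficit

lemma antitone_varDeficit : Antitone varDeficit :=
  antitone_of_hasDerivAt_nonpos VarDeficit.hasDerivAt_varDeficit fun t =>
    div_nonpos_of_nonpos_of_nonneg
      (neg_nonpos.2 (mul_nonneg (stdPhi_pos t).le (VarDeficit.N₀_nonneg t)))
      (pow_nonneg (stdCDF_pos t).le 3)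

lemma log_stdCDF_sub_le (b : ℝ) {v : ℝ} (hv : 0 ≤ v) :
    log (stdCDF (b - v)) ≤ log (stdCDF b) - invMills b * v - varDeficit b * v ^ 2 / 2 := by
  have hsub (x : ℝ) : HasDerivAt (fun x => b - x) (-1) x := by
    simpa using (hasDerivAt_id x).const_sub b
  have hlog (x : ℝ) : HasDerivAt (fun x => log (stdCDF (b - x))) (-invMills (b - x)) x :=
    (((hasDerivAt_stdCDF (b - x)).comp x (hsub x)).log (stdCDF_pos _).ne').congr_deriv
      (by simp [invMills, neg_div])
  have hmills (x : ℝ) : HasDerivAt (fun x => -invMills (b - x)) (-varDeficit (b - x)) x :=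
    ((hasDerivAt_invMills (b - x)).comp x (hsub x)).neg.congr_deriv (by simp)
  have h := le_of_hasDerivAt_of_secondDeriv_le (c := -varDeficit b) hv (fun x _ => hlog x)
    (fun x _ => hmills x) (fun x hx => neg_le_neg (antitone_varDeficit (by linarith [hx.1])))
  simp only [sub_zero] at h
  linarith

lemma integral_Iic_exp_mul_sub_mul_stdPhi (u m b : ℝ) :
    ∫ z in Iic b, exp (u * (z - m)) * stdPhi z = exp (u ^ 2 / 2 - u * m) * stdCDF (b - u) := by
  have hsplit (z : ℝ) :
      exp (u * (z - m)) * stdPhi z = exp (-(u * m)) * (exp (u * z) * stdPhi z) := by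
    rw [← mul_assoc, ← exp_add]; ring_nf
  simp_rw [hsplit, integral_const_mul, integral_Iic_exp_mul_stdPhi, ← mul_assoc, ← exp_add]
  ring_nf

/-- **Cumulant generating function bound.** Let `Z` be standard normal, `b ∈ ℝ`, and
`Y = Z - E[Z | Z ≤ b]` (so `E[Y | Z ≤ b] = 0` and `Var(Y | Z ≤ b) = V(b)`). Then for every
`u > 0`, `log E[exp(uY) | Z ≤ b] ≤ (u²/2) V(b)`, where
`E[f(Z) | Z ≤ b] = (1/Φ(b)) ∫_{-∞}^b f(z) φ(z) dz`. -/
theorem stmt15 (b u : ℝ) (hu : 0 < u) :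
    Real.log ((stdCDF b)⁻¹ *
        ∫ z in Set.Iic b, Real.exp (u * (z - truncMean b)) * stdPhi z)
      ≤ u ^ 2 / 2 * truncVar b := by
  have hΦ := stdCDF_pos b
  have hΦu := stdCDF_pos (b - u)
  rw [integral_Iic_exp_mul_sub_mul_stdPhi, log_mul (by positivity) (by positivity),
    log_mul (by positivity) hΦu.ne', log_inv, log_exp, truncMean_eq_neg_invMills,
    truncVar_eq_one_sub_varDeficit]
  linarith [log_stdCDF_sub_le b hu.le]
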